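/- Let n ≥ 1 and T ≥ 2 be natural numbers, let K ≥ 1 be a natural number, and let T_0, T_1, …, T_K be positive integers with ∑_{k=1}^{K} T_k = T. Suppose there exist indices 1 = n_1 < n_2 < … < n_γ ≤ K (with the convention n_{γ+1} = K + 1) such that γ ≤ 2·n·log₂ T and such that for every i ∈ {1, …, γ} and every k with n_i ≤ k ≤ n_{i+1} − 2, one has T_k = T_{k−1} + 1. Then K ≤ 2·√(n · T · log₂ T). -/

import Mathlib

open Finset

/-!
A macro episode of `L` episodes starts from a predecessor of length at least `1` and grows by one,
so its first `L - 1` episodes have lengths at least `2, 3, …, L` and its last one at least `1`: it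
covers at least `L (L + 1) / 2 ≥ L² / 2` slots. Summing over macro episodes, `∑ Lᵢ² ≤ 2 T`, and
Cauchy–Schwarz with `∑ Lᵢ = K` gives `K² ≤ 2 γ T ≤ 4 n T log₂ T`.
-/

section EpisodeLengths

variable (f : ℕ → ℕ) {a b : ℕ}

theorem apply_add_eq_of_step_eq_one (hstep : ∀ k, a ≤ k → k + 2 ≤ b → f k = f (k - 1) + 1) :
    ∀ d, a + d + 2 ≤ b → f (a + d) = f (a - 1) + (d + 1)
  | 0, h => by simpa using hstep a le_rfl (by omega)
  | d + 1, h => by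
    rw [← add_assoc, hstep (a + d + 1) (by omega) (by omega), Nat.add_sub_cancel,
      apply_add_eq_of_step_eq_one hstep d (by omega), add_assoc]

theorem sq_le_two_mul_sum_range_succ (m : ℕ) : m ^ 2 ≤ 2 * ∑ i ∈ range m, (i + 1) := by
  induction m with
  | zero => simp
  | succ m ih => rw [sum_range_succ]; nlinarith

theorem sq_sub_le_two_mul_sum_Ico (h0 : 0 < f (a - 1)) (hlast : 0 < f (b - 1))
    (hstep : ∀ k, a ≤ k → k + 2 ≤ b → f k = f (k - 1) + 1) :
    (b - a) ^ 2 ≤ 2 * ∑ k ∈ Ico a b, f k := by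
  rcases le_or_gt b a with hba | hab
  · simp [Nat.sub_eq_zero_of_le hba]
  obtain ⟨m, rfl⟩ := Nat.exists_eq_add_of_lt hab
  have hinit : ∑ d ∈ range m, (d + 2) ≤ ∑ d ∈ range m, f (a + d) :=
    sum_le_sum fun d hd => by
      rw [apply_add_eq_of_step_eq_one f hstep d (by rw [mem_range] at hd; omega)]; omega
  calc (a + m + 1 - a) ^ 2 = (m + 1) ^ 2 := by rw [add_assoc, Nat.add_sub_cancel_left]
    _ ≤ 2 * ∑ d ∈ range (m + 1), (d + 1) := sq_le_two_mul_sum_range_succ _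
    _ = 2 * (∑ d ∈ range m, (d + 2) + 1) := by rw [sum_range_succ']
    _ ≤ 2 * (∑ d ∈ range m, f (a + d) + f (a + m)) := by gcongr; exact hlast
    _ = 2 * ∑ k ∈ Ico a (a + m + 1), f k := by
      rw [sum_Ico_eq_sum_range, add_assoc, Nat.add_sub_cancel_left, sum_range_succ]

end EpisodeLengths

theorem sum_range_sum_Ico_of_monotone {M : Type*} [AddCommMonoid M] (f : ℕ → M) {c : ℕ → ℕ}
    (hc : Monotone c) (m : ℕ) :
    ∑ i ∈ range m, ∑ k ∈ Ico (c i) (c (i + 1)), f k = ∑ k ∈ Ico (c 0) (c m), f k := by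
  induction m with
  | zero => simp
  | succ m ih => rw [sum_range_succ, ih, sum_Ico_consecutive _ (hc m.zero_le) (hc m.le_succ)]

theorem sq_sub_le_mul_two_mul_sum_Ico (f : ℕ → ℕ) {c : ℕ → ℕ} (hc : Monotone c) (m : ℕ)
    (hblock : ∀ i < m, (c (i + 1) - c i) ^ 2 ≤ 2 * ∑ k ∈ Ico (c i) (c (i + 1)), f k) :
    (c m - c 0) ^ 2 ≤ m * (2 * ∑ k ∈ Ico (c 0) (c m), f k) :=
  calc (c m - c 0) ^ 2 = (∑ i ∈ range m, (c (i + 1) - c i)) ^ 2 := by rw [sum_range_tsub hc]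
    _ ≤ m * ∑ i ∈ range m, (c (i + 1) - c i) ^ 2 := by
      simpa using sq_sum_le_card_mul_sum_sq (s := range m) (f := fun i => c (i + 1) - c i)
    _ ≤ m * ∑ i ∈ range m, 2 * ∑ k ∈ Ico (c i) (c (i + 1)), f k := by
      gcongr with i hi
      exact hblock i (mem_range.mp hi)
    _ = m * (2 * ∑ k ∈ Ico (c 0) (c m), f k) := by
      rw [← mul_sum, sum_range_sum_Ico_of_monotone f hc]

theorem monotone_apply_min_of_le_succ {α : Type*} [Preorder α] {f : ℕ → α} {N : ℕ}
    (hf : ∀ i < N, f i ≤ f (i + 1)) : Monotone fun i => f (min i N) :=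
  monotone_nat_of_le_succ fun i => by
    rcases lt_or_ge i N with hi | hi
    · rw [min_eq_left hi.le, min_eq_left hi]
      exact hf i hi
    · rw [min_eq_right hi, min_eq_right (by omega)]

theorem le_two_mul_sqrt_of_sq_le {x y : ℝ} (h : x ^ 2 ≤ 4 * y) : x ≤ 2 * √y := by
  have := Real.abs_le_sqrt (x := x / 2) (y := y) (by linarith)
  linarith [le_abs_self (x / 2)]

theorem episode_count_lemma_general (n T K : ℕ)
    (Tl : ℕ → ℕ) (hpos : ∀ k ≤ K, 0 < Tl k)
    (hsum : ∑ k ∈ Finset.Icc 1 K, Tl k = T)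
    (hexists : ∃ (γ : ℕ) (ns : ℕ → ℕ), 1 ≤ γ ∧ ns 1 = 1 ∧
      (∀ i, 1 ≤ i → i < γ → ns i < ns (i + 1)) ∧ ns γ ≤ K ∧ ns (γ + 1) = K + 1 ∧
      ((γ : ℝ) ≤ 2 * n * Real.logb 2 T) ∧
      (∀ i, 1 ≤ i → i ≤ γ → ∀ k, ns i ≤ k → k ≤ ns (i + 1) - 2 →
        Tl k = Tl (k - 1) + 1)) :
    (K : ℝ) ≤ 2 * Real.sqrt ((n : ℝ) * T * Real.logb 2 T) := by
  obtain ⟨γ, ns, -, hns1, hlt, hnsγ, hnsγ1, hγle, hstep⟩ := hexists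
  -- `c i = n_{i+1}`, held constant from `i = γ` on so that `c` is monotone on all of `ℕ`.
  set c : ℕ → ℕ := fun i => ns (min i γ + 1)
  have hc_of_le : ∀ i ≤ γ, c i = ns (i + 1) := fun i hi => by simp [c, hi]
  have hc : Monotone c := monotone_apply_min_of_le_succ (N := γ) fun i hi => by
    rcases (show i + 1 ≤ γ by omega).lt_or_eq with hi' | hi'
    · exact (hlt (i + 1) (by omega) hi').le
    · rw [hi']
      omega
  have hc0 : c 0 = 1 := hc_of_le 0 γ.zero_le ▸ hns1
  have hcγ : c γ = K + 1 := hc_of_le γ le_rfl ▸ hnsγ1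
  have hblock : ∀ i < γ, (c (i + 1) - c i) ^ 2 ≤ 2 * ∑ k ∈ Ico (c i) (c (i + 1)), Tl k := by
    intro i hi
    have hci := hc (show i ≤ γ by omega)
    have hci' := hc (show i + 1 ≤ γ by omega)
    refine sq_sub_le_two_mul_sum_Ico Tl (hpos _ (by omega)) (hpos _ (by omega)) fun k hk hk2 => ?_
    rw [hc_of_le i hi.le] at hk
    rw [hc_of_le (i + 1) hi] at hk2
    exact hstep (i + 1) (by omega) (by omega) k hk (by omega)
  have hKsq : K ^ 2 ≤ γ * (2 * T) := by
    simpa [hc0, hcγ, ← hsum, Ico_add_one_right_eq_Icc] using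
      sq_sub_le_mul_two_mul_sum_Ico Tl hc γ hblock
  apply le_two_mul_sqrt_of_sq_le
  calc (K : ℝ) ^ 2 ≤ γ * (2 * T) := by exact_mod_cast hKsq
    _ ≤ 2 * n * Real.logb 2 T * (2 * T) := by gcongr
    _ = 4 * (n * T * Real.logb 2 T) := by ring

/-- Episode-count lemma (abstract form of the bound on `K_T` for mmDPT-TS):
if `γ ≤ 2 n log₂ T` and episode lengths grow by one within each of the `γ`
macro episodes, then `K ≤ 2 √(n T log₂ T)`. -/
theorem episode_count_lemma (n T K : ℕ) (hn : 1 ≤ n) (hT : 2 ≤ T) (hK : 1 ≤ K)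
    (Tl : ℕ → ℕ) (hpos : ∀ k ≤ K, 0 < Tl k)
    (hsum : ∑ k ∈ Finset.Icc 1 K, Tl k = T)
    (hexists : ∃ (γ : ℕ) (ns : ℕ → ℕ), 1 ≤ γ ∧ ns 1 = 1 ∧
      (∀ i, 1 ≤ i → i < γ → ns i < ns (i + 1)) ∧ ns γ ≤ K ∧ ns (γ + 1) = K + 1 ∧
      ((γ : ℝ) ≤ 2 * n * Real.logb 2 T) ∧
      (∀ i, 1 ≤ i → i ≤ γ → ∀ k, ns i ≤ k → k ≤ ns (i + 1) - 2 →
        Tl k = Tl (k - 1) + 1)) :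
    (K : ℝ) ≤ 2 * Real.sqrt ((n : ℝ) * T * Real.logb 2 T) :=
  episode_count_lemma_general n T K Tl hpos hsum hexists
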